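/- Define a(n) = Σ_{k=1}^{n-1} (k XOR (n-k)) where XOR is bitwise exclusive-or on nonnegative integers. Then a satisfies a(0)=a(1)=0, a(2n)=2a(n-1)+2a(n)+4n-4 for n ≥ 1, and a(2n+1)=4a(n)+6n for n ≥ 1. -/

import Mathlib

/-- `a n = Σ_{k=1}^{n-1} (k XOR (n-k))`. -/
def aXor (n : ℕ) : ℕ := ∑ k ∈ Finset.Ico 1 n, (k ^^^ (n - k))

/-!
Extend the sum to `b n = xorConv n = Σ_{k=0}^{n} (k XOR (n-k)) = a n + 2n` and split it by the parity of `k`.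
Since `(2i + r) XOR (2j + s) = 2 (i XOR j) + (r XOR s)`, the even and odd halves of `b (2n+1)`
are both `Σ (2 (i XOR (n-i)) + 1)`, while those of `b (2n+2)` are `2 b (n+1)` and `2 b n`
up to the boundary term `(2n+2) XOR 0`.
-/

open Finset

namespace Nat

theorem two_mul_xor_two_mul (a b : ℕ) : (2 * a) ^^^ (2 * b) = 2 * (a ^^^ b) := by
  simpa [Nat.bit] using Nat.xor_bit false a false b

theorem two_mul_add_one_xor_two_mul_add_one (a b : ℕ) :
    (2 * a + 1) ^^^ (2 * b + 1) = 2 * (a ^^^ b) := by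
  simpa [Nat.bit] using Nat.xor_bit true a true b

theorem two_mul_xor_two_mul_add_one (a b : ℕ) :
    (2 * a) ^^^ (2 * b + 1) = 2 * (a ^^^ b) + 1 := by
  simpa [Nat.bit] using Nat.xor_bit false a true b

theorem two_mul_add_one_xor_two_mul (a b : ℕ) :
    (2 * a + 1) ^^^ (2 * b) = 2 * (a ^^^ b) + 1 := by
  simpa [Nat.bit] using Nat.xor_bit true a false b

end Nat

theorem Finset.sum_range_two_mul {M : Type*} [AddCommMonoid M] (f : ℕ → M) (n : ℕ) :
    ∑ k ∈ range (2 * n), f k = ∑ j ∈ range n, (f (2 * j) + f (2 * j + 1)) := by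
  induction n with
  | zero => simp
  | succ n ih =>
    rw [Nat.mul_succ, sum_range_succ, sum_range_succ, sum_range_succ, ih, add_assoc]

def xorConv (n : ℕ) : ℕ := ∑ k ∈ range (n + 1), (k ^^^ (n - k))

theorem xorConv_eq_aXor_add (n : ℕ) : xorConv n = aXor n + 2 * n := by
  cases n with
  | zero => rfl
  | succ n =>
    rw [xorConv, range_eq_Ico, sum_eq_sum_Ico_succ_bot (by omega),
      sum_Ico_succ_top (by omega : 1 ≤ n + 1), aXor, Nat.sub_zero, Nat.zero_xor, Nat.sub_self, Nat.xor_zero]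
    ring

theorem xorConv_two_mul_add_one (n : ℕ) : xorConv (2 * n + 1) = 4 * xorConv n + 2 * (n + 1) := by
  have halves : ∀ j ∈ range (n + 1),
      ((2 * j) ^^^ (2 * n + 1 - 2 * j)) + ((2 * j + 1) ^^^ (2 * n + 1 - (2 * j + 1))) =
        4 * (j ^^^ (n - j)) + 2 := by
    intro j hj
    have hjn : j ≤ n := Nat.lt_succ_iff.mp (mem_range.mp hj)
    rw [show 2 * n + 1 - 2 * j = 2 * (n - j) + 1 by omega,
      show 2 * n + 1 - (2 * j + 1) = 2 * (n - j) by omega,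
      Nat.two_mul_xor_two_mul_add_one, Nat.two_mul_add_one_xor_two_mul]
    ring
  rw [xorConv, show 2 * n + 1 + 1 = 2 * (n + 1) by ring, sum_range_two_mul, sum_congr rfl halves,
    sum_add_distrib, ← mul_sum, sum_const, card_range, smul_eq_mul, xorConv]
  ring

theorem xorConv_two_mul_add_two (n : ℕ) :
    xorConv (2 * n + 2) = 2 * xorConv (n + 1) + 2 * xorConv n := by
  have halves : ∀ j ∈ range (n + 1),
      ((2 * j) ^^^ (2 * (n + 1) - 2 * j)) + ((2 * j + 1) ^^^ (2 * (n + 1) - (2 * j + 1))) =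
        2 * (j ^^^ (n + 1 - j)) + 2 * (j ^^^ (n - j)) := by
    intro j hj
    have hjn : j ≤ n := Nat.lt_succ_iff.mp (mem_range.mp hj)
    rw [show 2 * (n + 1) - 2 * j = 2 * (n + 1 - j) by omega,
      show 2 * (n + 1) - (2 * j + 1) = 2 * (n - j) + 1 by omega,
      Nat.two_mul_xor_two_mul, Nat.two_mul_add_one_xor_two_mul_add_one]
  have top : xorConv (n + 1) = ∑ j ∈ range (n + 1), (j ^^^ (n + 1 - j)) + (n + 1) := by
    rw [xorConv, sum_range_succ, Nat.sub_self, Nat.xor_zero]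
  rw [top, xorConv, sum_range_succ, show 2 * n + 2 = 2 * (n + 1) by ring, sum_range_two_mul,
    sum_congr rfl halves, sum_add_distrib, ← mul_sum, ← mul_sum, Nat.sub_self, Nat.xor_zero, xorConv]
  ring

theorem stmt19 :
    aXor 0 = 0 ∧ aXor 1 = 0 ∧
    (∀ n : ℕ, 1 ≤ n → aXor (2 * n) = 2 * aXor (n - 1) + 2 * aXor n + 4 * n - 4) ∧
    (∀ n : ℕ, 1 ≤ n → aXor (2 * n + 1) = 4 * aXor n + 6 * n) := by
  refine ⟨rfl, rfl, ?_, ?_⟩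
  · intro n hn
    obtain ⟨m, rfl⟩ : ∃ m, n = m + 1 := ⟨n - 1, by omega⟩
    have h := xorConv_two_mul_add_two m
    rw [xorConv_eq_aXor_add, xorConv_eq_aXor_add, xorConv_eq_aXor_add] at h
    rw [Nat.add_sub_cancel, mul_add_one]
    omega
  · intro n _
    have h := xorConv_two_mul_add_one n
    rw [xorConv_eq_aXor_add, xorConv_eq_aXor_add] at h
    omega
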